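/- arXiv:math/9309213 — 5 statements merged into one kernel-verified Lean document; each statement's English description precedes it below -/
import Mathlib

section
/- For every nonnegative integer n and every real x, the limit as α→+∞ of (2α)^{−n/2}·ℓ_n^α((2α)^{1/2}x+α) exists and equals h_n(x), the monic Hermite polynomial of degree n. -/
open Filter Real

/-- Pochhammer symbol `(a)_m = a (a+1) ⋯ (a+m-1)`. -/
noncomputable def poch (a : ℝ) (m : ℕ) : ℝ := ∏ j ∈ Finset.range m, (a + j)

/-- Monic Hermite polynomial of degree `n`. -/
noncomputable def monicHermite (n : ℕ) (x : ℝ) : ℝ :=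
  (n.factorial : ℝ) * ∑ m ∈ Finset.range (n / 2 + 1),
    (-1 : ℝ) ^ m * x ^ (n - 2 * m) / (4 ^ m * m.factorial * (n - 2 * m).factorial)

/-- Monic Laguerre polynomial of degree `n` with parameter `α`. -/
noncomputable def monicLaguerre (α : ℝ) (n : ℕ) (x : ℝ) : ℝ :=
  (-1 : ℝ) ^ n * n.factorial * ∑ k ∈ Finset.range (n + 1),
    (-1 : ℝ) ^ k * (poch (α + k + 1) (n - k) / ((n - k).factorial * k.factorial)) * x ^ k

/-- Monic Jacobi polynomial of degree `n` with parameters `α, β`. -/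
noncomputable def monicJacobi (α β : ℝ) (n : ℕ) (x : ℝ) : ℝ :=
  ((n.factorial : ℝ) / poch (n + α + β + 1) n) *
    ∑ k ∈ Finset.range (n + 1),
      (poch (n + α - k + 1) k / k.factorial) *
      (poch (β + k + 1) (n - k) / (n - k).factorial) *
      (x - 1) ^ (n - k) * (x + 1) ^ k

/-- Monic Racah polynomial of degree `n` in the variable `y`. -/
noncomputable def monicRacah (α β N δ : ℝ) (n : ℕ) (y : ℝ) : ℝ :=
  (1 / poch (n + α + β + 1) n) *
    ∑ k ∈ Finset.range (n + 1),
      (poch (-(n : ℝ)) k * poch (n + α + β + 1) k / k.factorial) *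
      poch (α + k + 1) (n - k) * poch (β + δ + k + 1) (n - k) * poch (k - N) (n - k) *
      ∏ j ∈ Finset.range k, ((j : ℝ) * (j + δ - N) - y)

/-- Monic Hahn polynomial of degree `n`. -/
noncomputable def monicHahn (α β N : ℝ) (n : ℕ) (x : ℝ) : ℝ :=
  (1 / poch (n + α + β + 1) n) *
    ∑ k ∈ Finset.range (n + 1),
      (poch (-(n : ℝ)) k * poch (n + α + β + 1) k * poch (-x) k / k.factorial) *
      poch (α + k + 1) (n - k) * poch (k - N) (n - k)

/-- Monic Meixner polynomial of degree `n`. -/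
noncomputable def monicMeixner (b c : ℝ) (n : ℕ) (x : ℝ) : ℝ :=
  (c / (c - 1)) ^ n * ∑ k ∈ Finset.range (n + 1),
    (poch (-(n : ℝ)) k * poch (-x) k / k.factorial) * poch (b + k) (n - k) * (1 - 1 / c) ^ k

/-- Monic Krawtchouk polynomial of degree `n`. -/
noncomputable def monicKrawtchouk (p N : ℝ) (n : ℕ) (x : ℝ) : ℝ :=
  p ^ n * ∑ k ∈ Finset.range (n + 1),
    (poch (-(n : ℝ)) k * poch (-x) k / k.factorial) * poch (k - N) (n - k) * (1 / p) ^ k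

/-- `ρ = (α+β)^{3/2} / (αβ)^{1/2}`. -/
noncomputable def jacobiRho (α β : ℝ) : ℝ := (α + β) ^ ((3 : ℝ) / 2) / Real.sqrt (α * β)

/-- `σ = (α-β)/(α+β)`. -/
noncomputable def jacobiSigma (α β : ℝ) : ℝ := (α - β) / (α + β)

/-- Uniformly rescaled monic Jacobi polynomial `p_n(x; α, β) = ρ^n p_n^{(α,β)}(ρ⁻¹x - σ)`. -/
noncomputable def rescaledJacobi (α β : ℝ) (n : ℕ) (x : ℝ) : ℝ :=
  jacobiRho α β ^ n * monicJacobi α β n (x / jacobiRho α β - jacobiSigma α β)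

/-- `ρ = ((α+β)³/(αβ(β+δ)(N+α+β)(δ-α)N))^{1/2}` with `β = bα`, `δ = (bdν+1)α`, `N = bν`. -/
noncomputable def racahRho (α b d ν : ℝ) : ℝ :=
  Real.sqrt ((α + b * α) ^ 3 /
    (α * (b * α) * (b * α + (b * d * ν + 1) * α) * (b * ν + α + b * α) *
      ((b * d * ν + 1) * α - α) * (b * ν)))

/-- `σ = -N(α+1)(β+δ+1)/(α+β+2)` with `β = bα`, `δ = (bdν+1)α`, `N = bν`. -/
noncomputable def racahSigma (α b d ν : ℝ) : ℝ :=
  -((b * ν) * (α + 1) * (b * α + (b * d * ν + 1) * α + 1)) / (α + b * α + 2)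

/-- Rescaled monic Racah polynomial `p_n(x; α, b, d, ν) = ρ^n r_n(ρ⁻¹x - σ; α, bα, bν, (bdν+1)α)`. -/
noncomputable def rescaledRacah (α b d ν : ℝ) (n : ℕ) (x : ℝ) : ℝ :=
  racahRho α b d ν ^ n *
    monicRacah α (b * α) (b * ν) ((b * d * ν + 1) * α) n
      (x / racahRho α b d ν - racahSigma α b d ν)
lemma poch_succ (a : ℝ) (m : ℕ) : poch a (m+1) = poch a m * (a + m) := by
  simp [poch, Finset.prod_range_succ]

lemma poch_succ' (a : ℝ) (m : ℕ) : poch a (m+1) = a * poch (a+1) m := by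
  rw [poch, Finset.prod_range_succ', mul_comm]
  simp only [Nat.cast_zero, add_zero]
  congr 1
  refine Finset.prod_congr rfl fun i _ => ?_
  push_cast [poch]; ring

/-- coefficient form -/
noncomputable def lc (α : ℝ) (N k : ℕ) : ℝ :=
  (-1:ℝ)^(N+k) * N.factorial * poch (α + k + 1) (N - k) / ((N - k).factorial * k.factorial)

lemma monicLaguerre_eq (α : ℝ) (N : ℕ) (x : ℝ) :
    monicLaguerre α N x = ∑ k ∈ Finset.range (N+1), lc α N k * x ^ k := by
  rw [monicLaguerre, Finset.mul_sum]
  refine Finset.sum_congr rfl fun k _ => ?_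
  rw [lc, pow_add]
  ring

lemma factc (m : ℕ) : ((m+1).factorial : ℝ) = (m+1) * m.factorial := by
  rw [Nat.factorial_succ]; push_cast; ring

lemma neg_one_pow_mod (m : ℕ) : (-1:ℝ)^m = (-1)^(m % 2) := by
  conv_lhs => rw [← Nat.mod_add_div m 2, pow_add, pow_mul]
  norm_num

lemma neg_one_pow_even (m k : ℕ) (h : m % 2 = k % 2) : (-1:ℝ)^m = (-1)^k := by
  rw [neg_one_pow_mod, h, ← neg_one_pow_mod]

lemma poch_two (a : ℝ) (n : ℕ) : poch a (n+2) = poch a n * (a+n) * (a+n+1) := by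
  rw [show n+2 = (n+1)+1 by omega, poch_succ, poch_succ]; push_cast; ring

lemma fact_ne (n : ℕ) : ((n.factorial : ℝ)) ≠ 0 := by
  exact_mod_cast (Nat.factorial_pos n).ne'

lemma lc_zero (α : ℝ) (n : ℕ) :
    lc α (n+2) 0 = -(α + 2*((n:ℝ)+1) + 1) * lc α (n+1) 0
      - (((n:ℝ)+1) * (((n:ℝ)+1) + α)) * lc α n 0 := by
  simp only [lc, Nat.sub_zero, Nat.cast_zero, add_zero, Nat.factorial_zero,
    Nat.cast_one, mul_one]
  rw [poch_two, poch_succ, pow_succ, pow_succ]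
  push_cast [Nat.factorial_succ]
  field_simp
  ring

lemma lc_top2 (α : ℝ) (n : ℕ) : lc α (n+2) (n+2) = lc α (n+1) (n+1) := by
  simp only [lc, Nat.sub_self, Nat.factorial_zero, Nat.cast_one, one_mul]
  rw [neg_one_pow_even (n+2+(n+2)) 0 (by omega), neg_one_pow_even (n+1+(n+1)) 0 (by omega)]
  simp [poch, div_self (fact_ne _)]

lemma lc_top1 (α : ℝ) (n : ℕ) :
    lc α (n+2) (n+1) = lc α (n+1) n
      - (α + 2*((n:ℝ)+1) + 1) * lc α (n+1) (n+1) := by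
  simp only [lc, Nat.sub_self, Nat.factorial_zero, Nat.cast_one, one_mul,
    show n+2-(n+1) = 1 by omega, show n+1-n = 1 by omega]
  rw [neg_one_pow_even (n+2+(n+1)) 1 (by omega), neg_one_pow_even (n+1+n) 1 (by omega),
    neg_one_pow_even (n+1+(n+1)) 0 (by omega)]
  simp only [poch, Finset.prod_range_one, Finset.prod_range_zero, Nat.cast_zero, add_zero,
    Nat.factorial_one, pow_one, pow_zero]
  push_cast [Nat.factorial_succ]
  have h1 := fact_ne n
  field_simp
  ring

lemma lc_gen (α : ℝ) (i m : ℕ) :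
    lc α (i+1+m+2) (i+1) = lc α (i+1+m+1) i
      - (α + 2*((i+1+m:ℕ):ℝ)+2+1) * lc α (i+1+m+1) (i+1)
      - ((((i+1+m:ℕ):ℝ)+1) * ((((i+1+m:ℕ):ℝ)+1) + α)) * lc α (i+1+m) (i+1) := by
  simp only [lc, show i+1+m+2-(i+1) = m+2 by omega, show i+1+m+1-i = m+2 by omega,
    show i+1+m+1-(i+1) = m+1 by omega, show i+1+m-(i+1) = m by omega]
  rw [neg_one_pow_even (i+1+m+2+(i+1)) m (by omega), neg_one_pow_even (i+1+m+1+i) m (by omega),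
    neg_one_pow_even (i+1+m+1+(i+1)) (m+1) (by omega),
    neg_one_pow_even (i+1+m+(i+1)) m (by omega)]
  have hb : (α + (i:ℝ) + 1) = (α + ((i+1:ℕ):ℝ)) := by push_cast; ring
  have hb2 : (α + (i:ℝ) + 1 + 1) = (α + ((i+1:ℕ):ℝ) + 1) := by push_cast; ring
  rw [poch_two (α + ((i+1:ℕ):ℝ) + 1) m, poch_succ (α + ((i+1:ℕ):ℝ) + 1) m,
    show m+2 = (m+1)+1 by omega,
    poch_succ' (α + (i:ℝ) + 1) (m+1), poch_succ (α + (i:ℝ) + 1 + 1) m, hb2]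
  rw [show i+1+m+2 = (i+1+m+1)+1 by omega]
  push_cast [Nat.factorial_succ, pow_succ]
  have h1 := fact_ne m
  have h2 := fact_ne i
  have h3 := fact_ne (i+1+m)
  field_simp
  ring

lemma lag_rec (α x : ℝ) (n : ℕ) :
    monicLaguerre α (n+2) x = (x - (α + 2*((n:ℝ)+1) + 1)) * monicLaguerre α (n+1) x
      - (((n:ℝ)+1) * (((n:ℝ)+1) + α)) * monicLaguerre α n x := by
  rw [monicLaguerre_eq, monicLaguerre_eq, monicLaguerre_eq]
  have key : ∀ k ∈ Finset.range (n+3),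
      lc α (n+2) k * x ^ k =
        (if k = 0 then 0 else lc α (n+1) (k-1) * x ^ k)
        - (α + 2*((n:ℝ)+1) + 1) * (if k ≤ n+1 then lc α (n+1) k * x ^ k else 0)
        - (((n:ℝ)+1) * (((n:ℝ)+1) + α)) * (if k ≤ n then lc α n k * x ^ k else 0) := by
    intro k hk
    have hk3 : k < n + 3 := Finset.mem_range.mp hk
    rcases Nat.eq_zero_or_pos k with rfl | hkpos
    · rw [if_pos rfl, if_pos (by omega : 0 ≤ n+1), if_pos (Nat.zero_le n), lc_zero]
      ring
    · rcases lt_or_ge k (n+1) with hlt | hge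
      · obtain ⟨i, rfl⟩ : ∃ i, k = i + 1 := ⟨k-1, by omega⟩
        obtain ⟨m, rfl⟩ : ∃ m, n = i + 1 + m := ⟨n - (i+1), by omega⟩
        rw [if_neg (by omega), if_pos (by omega), if_pos (by omega),
          Nat.add_sub_cancel, lc_gen]
        push_cast
        ring
      · rcases (by omega : k = n+1 ∨ k = n+2) with rfl | rfl
        · rw [if_neg (by omega), if_pos le_rfl, if_neg (by omega),
            Nat.add_sub_cancel, lc_top1]
          ring
        · rw [if_neg (by omega), if_neg (by omega), if_neg (by omega),
            show n+2-1 = n+1 by omega, lc_top2]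
          ring
  rw [show n+2+1 = n+3 by omega, Finset.sum_congr rfl key,
    Finset.sum_sub_distrib, Finset.sum_sub_distrib, ← Finset.mul_sum, ← Finset.mul_sum]
  have hA : ∑ k ∈ Finset.range (n+3), (if k = 0 then 0 else lc α (n+1) (k-1) * x ^ k)
      = x * ∑ k ∈ Finset.range (n+2), lc α (n+1) k * x ^ k := by
    rw [Finset.sum_range_succ' (fun k => if k = 0 then (0:ℝ) else lc α (n+1) (k-1) * x ^ k) (n+2),
      Finset.mul_sum, if_pos rfl, add_zero]
    refine Finset.sum_congr rfl fun k _ => ?_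
    rw [if_neg (Nat.succ_ne_zero k), Nat.add_sub_cancel, pow_succ]
    ring
  have hB : ∑ k ∈ Finset.range (n+3), (if k ≤ n+1 then lc α (n+1) k * x ^ k else 0)
      = ∑ k ∈ Finset.range (n+2), lc α (n+1) k * x ^ k := by
    rw [Finset.sum_range_succ (fun k => if k ≤ n+1 then lc α (n+1) k * x ^ k else (0:ℝ)) (n+2),
      if_neg (by omega : ¬ (n+2 ≤ n+1)), add_zero]
    refine Finset.sum_congr rfl fun k hkm => ?_
    have := Finset.mem_range.mp hkm
    rw [if_pos (by omega : k ≤ n+1)]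
  have hC : ∑ k ∈ Finset.range (n+3), (if k ≤ n then lc α n k * x ^ k else 0)
      = ∑ k ∈ Finset.range (n+1), lc α n k * x ^ k := by
    rw [Finset.sum_range_succ (fun k => if k ≤ n then lc α n k * x ^ k else (0:ℝ)) (n+2),
      Finset.sum_range_succ (fun k => if k ≤ n then lc α n k * x ^ k else (0:ℝ)) (n+1),
      if_neg (by omega : ¬ (n+2 ≤ n)), if_neg (by omega : ¬ (n+1 ≤ n)), add_zero, add_zero]
    refine Finset.sum_congr rfl fun k hkm => ?_
    have := Finset.mem_range.mp hkm
    rw [if_pos (by omega : k ≤ n)]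
  rw [hA, hB, hC]
  ring

noncomputable def hc (n m : ℕ) : ℝ :=
  (-1:ℝ)^m * n.factorial / (4^m * m.factorial * (n - 2*m).factorial)

lemma monicHermite_eq (n : ℕ) (x : ℝ) :
    monicHermite n x = ∑ m ∈ Finset.range (n/2+1), hc n m * x ^ (n - 2*m) := by
  rw [monicHermite, Finset.mul_sum]
  refine Finset.sum_congr rfl fun m _ => ?_
  rw [hc]; ring

lemma hc_zero (n : ℕ) : hc n 0 = 1 := by
  simp [hc, div_self (fact_ne _)]

lemma hc_gen (q r : ℕ) :
    hc (2*q+1+r+2) (q+1) = hc (2*q+1+r+1) (q+1)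
      - ((((2*q+1+r:ℕ)):ℝ)+1)/2 * hc (2*q+1+r) q := by
  simp only [hc, show 2*q+1+r+2 - 2*(q+1) = r+1 by omega,
    show 2*q+1+r+1 - 2*(q+1) = r by omega, show 2*q+1+r - 2*q = r+1 by omega]
  rw [show 2*q+1+r+2 = (2*q+1+r+1)+1 by omega, factc (2*q+1+r+1), factc (2*q+1+r),
    factc r, factc q, pow_succ 4 q, pow_succ (-1:ℝ) q]
  have h1 := fact_ne q
  have h2 := fact_ne r
  have h3 := fact_ne (2*q+1+r)
  have h4 : (4:ℝ)^q ≠ 0 := by positivity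
  push_cast
  field_simp
  ring

lemma hc_even_edge (p : ℕ) :
    hc (2*p+2) (p+1) = -((((2*p:ℕ)):ℝ)+1)/2 * hc (2*p) p := by
  simp only [hc, show 2*p+2 - 2*(p+1) = 0 by omega, Nat.sub_self, Nat.factorial_zero]
  rw [show 2*p+2 = (2*p+1)+1 by omega, factc (2*p+1), factc (2*p),
    factc p, pow_succ 4 p, pow_succ (-1:ℝ) p]
  have h1 := fact_ne p
  have h3 := fact_ne (2*p)
  have h4 : (4:ℝ)^p ≠ 0 := by positivity
  push_cast
  field_simp
  ring

lemma herm_rec (x : ℝ) (n : ℕ) :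
    monicHermite (n+2) x = x * monicHermite (n+1) x - (((n:ℝ)+1)/2) * monicHermite n x := by
  rcases Nat.even_or_odd n with h | h
  · -- even: n = 2p
    obtain ⟨p, rfl⟩ : ∃ p, n = 2*p := ⟨n/2, by rcases h with ⟨r, rfl⟩; omega⟩
    rw [monicHermite_eq, monicHermite_eq, monicHermite_eq,
      show (2*p+2)/2+1 = p+2 by omega, show (2*p+1)/2+1 = p+1 by omega,
      show (2*p)/2+1 = p+1 by omega]
    have key : ∀ m ∈ Finset.range (p+2),
        hc (2*p+2) m * x ^ (2*p+2 - 2*m) =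
          (if m ≤ p then x * (hc (2*p+1) m * x ^ (2*p+1 - 2*m)) else 0)
          - (((2*p:ℕ):ℝ)+1)/2 *
            (if 1 ≤ m then hc (2*p) (m-1) * x ^ (2*p - 2*(m-1)) else 0) := by
      intro m hm
      have hm2 : m < p + 2 := Finset.mem_range.mp hm
      rcases Nat.eq_zero_or_pos m with rfl | hmpos
      · rw [if_pos (Nat.zero_le p), if_neg (by omega), hc_zero, hc_zero]
        simp only [Nat.mul_zero, Nat.sub_zero, mul_zero, sub_zero, one_mul]
        rw [show 2*p+2 = (2*p+1)+1 by omega, pow_succ]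
        ring
      · rcases lt_or_ge m (p+1) with hlt | hge
        · obtain ⟨q, rfl⟩ : ∃ q, m = q + 1 := ⟨m-1, by omega⟩
          obtain ⟨s, hs⟩ : ∃ s, 2*p = 2*q+1+s := ⟨2*p - (2*q+1), by omega⟩
          rw [if_pos (by omega), if_pos (by omega), Nat.add_sub_cancel]
          rw [show 2*p+2 = 2*q+1+s+2 by omega, show 2*p+1 = 2*q+1+s+1 by omega,
            show 2*p = 2*q+1+s by omega, hc_gen]
          rw [show 2*q+1+s+2 - 2*(q+1) = s+1 by omega,
            show 2*q+1+s+1 - 2*(q+1) = s by omega, show 2*q+1+s - 2*q = s+1 by omega,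
            pow_succ]
          ring
        · have : m = p + 1 := by omega
          subst this
          rw [if_neg (by omega), if_pos (by omega), Nat.add_sub_cancel, hc_even_edge]
          rw [show 2*p+2 - 2*(p+1) = 0 by omega, show 2*p - 2*p = 0 by omega]
          ring
    rw [Finset.sum_congr rfl key, Finset.sum_sub_distrib, ← Finset.mul_sum]
    have hA : ∑ m ∈ Finset.range (p+2),
        (if m ≤ p then x * (hc (2*p+1) m * x ^ (2*p+1 - 2*m)) else 0)
        = x * ∑ m ∈ Finset.range (p+1), hc (2*p+1) m * x ^ (2*p+1 - 2*m) := by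
      rw [Finset.sum_range_succ
          (fun m => if m ≤ p then x * (hc (2*p+1) m * x ^ (2*p+1 - 2*m)) else (0:ℝ)) (p+1),
        if_neg (by omega : ¬ (p+1 ≤ p)), add_zero, Finset.mul_sum]
      refine Finset.sum_congr rfl fun m hm => ?_
      have := Finset.mem_range.mp hm
      rw [if_pos (by omega : m ≤ p)]
    have hB : ∑ m ∈ Finset.range (p+2),
        (if 1 ≤ m then hc (2*p) (m-1) * x ^ (2*p - 2*(m-1)) else 0)
        = ∑ m ∈ Finset.range (p+1), hc (2*p) m * x ^ (2*p - 2*m) := by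
      rw [Finset.sum_range_succ'
          (fun m => if 1 ≤ m then hc (2*p) (m-1) * x ^ (2*p - 2*(m-1)) else (0:ℝ)) (p+1),
        if_neg (by omega : ¬ (1 ≤ 0)), add_zero]
      refine Finset.sum_congr rfl fun m _ => ?_
      rw [if_pos (by omega : 1 ≤ m+1), Nat.add_sub_cancel]
    rw [hA, hB]
  · -- odd: n = 2p+1
    obtain ⟨p, rfl⟩ := h
    rw [monicHermite_eq, monicHermite_eq, monicHermite_eq,
      show (2*p+1+2)/2+1 = p+2 by omega, show (2*p+1+1)/2+1 = p+2 by omega,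
      show (2*p+1)/2+1 = p+1 by omega]
    have key : ∀ m ∈ Finset.range (p+2),
        hc (2*p+1+2) m * x ^ (2*p+1+2 - 2*m) =
          x * (hc (2*p+1+1) m * x ^ (2*p+1+1 - 2*m))
          - (((2*p+1:ℕ):ℝ)+1)/2 *
            (if 1 ≤ m then hc (2*p+1) (m-1) * x ^ (2*p+1 - 2*(m-1)) else 0) := by
      intro m hm
      have hm2 : m < p + 2 := Finset.mem_range.mp hm
      rcases Nat.eq_zero_or_pos m with rfl | hmpos
      · rw [if_neg (by omega), hc_zero, hc_zero]
        simp only [Nat.mul_zero, Nat.sub_zero, mul_zero, sub_zero, one_mul]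
        rw [show 2*p+1+2 = (2*p+1+1)+1 by omega, pow_succ]
        ring
      · obtain ⟨q, rfl⟩ : ∃ q, m = q + 1 := ⟨m-1, by omega⟩
        obtain ⟨s, hs⟩ : ∃ s, 2*p+1 = 2*q+1+s := ⟨2*p+1 - (2*q+1), by omega⟩
        rw [if_pos (by omega), Nat.add_sub_cancel]
        rw [show 2*p+1+2 = 2*q+1+s+2 by omega, show 2*p+1+1 = 2*q+1+s+1 by omega,
          show 2*p+1 = 2*q+1+s by omega, hc_gen]
        rw [show 2*q+1+s+2 - 2*(q+1) = s+1 by omega,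
          show 2*q+1+s+1 - 2*(q+1) = s by omega, show 2*q+1+s - 2*q = s+1 by omega,
          pow_succ]
        ring
    rw [Finset.sum_congr rfl key, Finset.sum_sub_distrib, ← Finset.mul_sum, ← Finset.mul_sum]
    have hB : ∑ m ∈ Finset.range (p+2),
        (if 1 ≤ m then hc (2*p+1) (m-1) * x ^ (2*p+1 - 2*(m-1)) else 0)
        = ∑ m ∈ Finset.range (p+1), hc (2*p+1) m * x ^ (2*p+1 - 2*m) := by
      rw [Finset.sum_range_succ'
          (fun m => if 1 ≤ m then hc (2*p+1) (m-1) * x ^ (2*p+1 - 2*(m-1)) else (0:ℝ)) (p+1),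
        if_neg (by omega : ¬ (1 ≤ 0)), add_zero]
      refine Finset.sum_congr rfl fun m _ => ?_
      rw [if_pos (by omega : 1 ≤ m+1), Nat.add_sub_cancel]
    rw [hB]

lemma rpow_nat_half (α : ℝ) (hα : 0 < α) (j : ℕ) :
    (2*α) ^ (-(j:ℝ)/2) = (Real.sqrt (2*α))⁻¹ ^ j := by
  have hr : (0:ℝ) < 2*α := by linarith
  rw [Real.sqrt_eq_rpow, ← Real.rpow_natCast ((2*α) ^ ((1:ℝ)/2))⁻¹ j,
    ← Real.rpow_neg_one ((2*α) ^ ((1:ℝ)/2)),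
    ← Real.rpow_mul (by positivity : (0:ℝ) ≤ (2*α)^((1:ℝ)/2)), ← Real.rpow_mul hr.le]
  congr 1
  ring

lemma tendsto_two_mul : Tendsto (fun α : ℝ => 2*α) atTop atTop :=
  Filter.tendsto_id.const_mul_atTop two_pos

lemma tendsto_half_pow : Tendsto (fun α : ℝ => (2*α) ^ (-(1:ℝ)/2)) atTop (nhds 0) := by
  have h := (tendsto_rpow_neg_atTop (by norm_num : (0:ℝ) < 1/2)).comp tendsto_two_mul
  refine h.congr fun α => ?_
  norm_num

lemma tendsto_inv_two_mul : Tendsto (fun α : ℝ => (2*α)⁻¹) atTop (nhds 0) :=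
  tendsto_two_mul.inv_tendsto_atTop

/-- `lim_{α→∞} (2α)^{-n/2} ℓ_n^α((2α)^{1/2} x + α) = h_n(x)`. -/
theorem laguerre_to_hermite_limit (n : ℕ) (x : ℝ) :
    Filter.Tendsto
      (fun α : ℝ => (2 * α) ^ (-(n : ℝ) / 2) * monicLaguerre α n (Real.sqrt (2 * α) * x + α))
      Filter.atTop (nhds (monicHermite n x)) := by
  have base0 : Tendsto
      (fun α : ℝ => (2 * α) ^ (-((0:ℕ) : ℝ) / 2) * monicLaguerre α 0 (Real.sqrt (2 * α) * x + α))
      atTop (nhds (monicHermite 0 x)) := by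
    have h0 : monicHermite 0 x = 1 := by
      simp [monicHermite]
    rw [h0]
    have : ∀ α : ℝ, (2 * α) ^ (-((0:ℕ) : ℝ) / 2) * monicLaguerre α 0 (Real.sqrt (2 * α) * x + α) = 1 := by
      intro α
      simp [monicLaguerre, poch]
    exact (tendsto_const_nhds.congr (fun α => (this α).symm))
  have base1 : Tendsto
      (fun α : ℝ => (2 * α) ^ (-((1:ℕ) : ℝ) / 2) * monicLaguerre α 1 (Real.sqrt (2 * α) * x + α))
      atTop (nhds (monicHermite 1 x)) := by
    have h1 : monicHermite 1 x = x := by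
      norm_num [monicHermite]
    have ev : ∀ᶠ α : ℝ in atTop,
        x - (2*α) ^ (-(1:ℝ)/2)
          = (2 * α) ^ (-((1:ℕ) : ℝ) / 2) * monicLaguerre α 1 (Real.sqrt (2 * α) * x + α) := by
      filter_upwards [eventually_gt_atTop 0] with α hα
      have hu : 0 < Real.sqrt (2*α) := Real.sqrt_pos.mpr (by linarith)
      have hL : monicLaguerre α 1 (Real.sqrt (2 * α) * x + α)
          = Real.sqrt (2*α) * x + α - (α+1) := by
        simp [monicLaguerre, Finset.sum_range_succ, poch]
        ring
      rw [hL, rpow_nat_half α hα 1, show (-(1:ℝ)/2) = -((1:ℕ):ℝ)/2 by norm_num,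
        rpow_nat_half α hα 1]
      rw [pow_one]
      field_simp
      ring
    have lim : Tendsto (fun α:ℝ => x - (2*α)^(-(1:ℝ)/2)) atTop (nhds (x - 0)) :=
      tendsto_const_nhds.sub tendsto_half_pow
    rw [sub_zero] at lim
    rw [h1]
    exact lim.congr' ev
  have step : ∀ k : ℕ,
      Tendsto (fun α : ℝ => (2 * α) ^ (-((k:ℕ) : ℝ) / 2) *
          monicLaguerre α k (Real.sqrt (2 * α) * x + α)) atTop (nhds (monicHermite k x)) →
      Tendsto (fun α : ℝ => (2 * α) ^ (-((k+1:ℕ) : ℝ) / 2) *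
          monicLaguerre α (k+1) (Real.sqrt (2 * α) * x + α)) atTop (nhds (monicHermite (k+1) x)) →
      Tendsto (fun α : ℝ => (2 * α) ^ (-((k+2:ℕ) : ℝ) / 2) *
          monicLaguerre α (k+2) (Real.sqrt (2 * α) * x + α)) atTop (nhds (monicHermite (k+2) x)) := by
    intro k ih0 ih1
    have ev : ∀ᶠ α : ℝ in atTop,
        (x - (2*(k:ℝ)+3) * (2*α) ^ (-(1:ℝ)/2)) *
            ((2 * α) ^ (-((k+1:ℕ) : ℝ) / 2) * monicLaguerre α (k+1) (Real.sqrt (2 * α) * x + α))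
          - (((k:ℝ)+1) * (((k:ℝ)+1) + α) / (2*α)) *
            ((2 * α) ^ (-((k:ℕ) : ℝ) / 2) * monicLaguerre α k (Real.sqrt (2 * α) * x + α))
        = (2 * α) ^ (-((k+2:ℕ) : ℝ) / 2) *
            monicLaguerre α (k+2) (Real.sqrt (2 * α) * x + α) := by
      filter_upwards [eventually_gt_atTop 0] with α hα
      have hu : 0 < Real.sqrt (2*α) := Real.sqrt_pos.mpr (by linarith)
      have hu2 : Real.sqrt (2*α) ^ 2 = 2*α := Real.sq_sqrt (by linarith)
      rw [rpow_nat_half α hα, rpow_nat_half α hα, rpow_nat_half α hα,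
        show (-(1:ℝ)/2) = -((1:ℕ):ℝ)/2 by norm_num, rpow_nat_half α hα 1, pow_one,
        lag_rec α (Real.sqrt (2 * α) * x + α) k,
        pow_succ (Real.sqrt (2*α))⁻¹ (k+1), pow_succ (Real.sqrt (2*α))⁻¹ k]
      set u := Real.sqrt (2*α) with hu_def
      rw [← hu2]
      field_simp
      ring
    have coefflim : Tendsto (fun α : ℝ => ((k:ℝ)+1) * (((k:ℝ)+1) + α) / (2*α)) atTop
        (nhds (((k:ℝ)+1)/2)) := by
      have ev2 : ∀ᶠ α : ℝ in atTop,
          ((k:ℝ)+1) * ((k:ℝ)+1) * (2*α)⁻¹ + ((k:ℝ)+1)/2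
            = ((k:ℝ)+1) * (((k:ℝ)+1) + α) / (2*α) := by
        filter_upwards [eventually_gt_atTop 0] with α hα
        field_simp
      have lim2 : Tendsto (fun α : ℝ => ((k:ℝ)+1) * ((k:ℝ)+1) * (2*α)⁻¹ + ((k:ℝ)+1)/2) atTop
          (nhds (((k:ℝ)+1) * ((k:ℝ)+1) * 0 + ((k:ℝ)+1)/2)) :=
        (tendsto_inv_two_mul.const_mul _).add tendsto_const_nhds
      rw [show ((k:ℝ)+1) * ((k:ℝ)+1) * 0 + ((k:ℝ)+1)/2 = ((k:ℝ)+1)/2 by ring] at lim2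
      exact lim2.congr' ev2
    have lim : Tendsto (fun α : ℝ =>
        (x - (2*(k:ℝ)+3) * (2*α) ^ (-(1:ℝ)/2)) *
            ((2 * α) ^ (-((k+1:ℕ) : ℝ) / 2) * monicLaguerre α (k+1) (Real.sqrt (2 * α) * x + α))
          - (((k:ℝ)+1) * (((k:ℝ)+1) + α) / (2*α)) *
            ((2 * α) ^ (-((k:ℕ) : ℝ) / 2) * monicLaguerre α k (Real.sqrt (2 * α) * x + α)))
        atTop (nhds ((x - (2*(k:ℝ)+3) * 0) * monicHermite (k+1) x
          - (((k:ℝ)+1)/2) * monicHermite k x)) :=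
      ((tendsto_const_nhds.sub (tendsto_half_pow.const_mul _)).mul ih1).sub (coefflim.mul ih0)
    rw [show (x - (2*(k:ℝ)+3) * 0) * monicHermite (k+1) x
        - (((k:ℝ)+1)/2) * monicHermite k x
        = x * monicHermite (k+1) x - (((k:ℝ)+1)/2) * monicHermite k x by ring,
      ← herm_rec x k] at lim
    exact lim.congr' ev
  have main : ∀ m : ℕ,
      Tendsto (fun α : ℝ => (2 * α) ^ (-((m:ℕ) : ℝ) / 2) *
          monicLaguerre α m (Real.sqrt (2 * α) * x + α)) atTop (nhds (monicHermite m x)) ∧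
      Tendsto (fun α : ℝ => (2 * α) ^ (-((m+1:ℕ) : ℝ) / 2) *
          monicLaguerre α (m+1) (Real.sqrt (2 * α) * x + α)) atTop (nhds (monicHermite (m+1) x)) := by
    intro m
    induction m with
    | zero => exact ⟨base0, base1⟩
    | succ j ih => exact ⟨ih.2, step j ih.1 ih.2⟩
  exact (main n).1
end

section
/- Fix an integer n≥1. For s,t>0 define G_n(s,t) = ρ²·4n(n+α)(n+β)(n+α+β)/((2n+α+β−1)(2n+α+β)²(2n+α+β+1)), where α=1/s, β=1/t and ρ = (α+β)^{3/2}/(αβ)^{1/2}. Then G_n extends to a continuous function on the closed quadrant [0,∞)², and the extension satisfies G_n(s,0) = 4n(1+ns) for s≥0, G_n(0,t) = 4n(1+nt) for t≥0, and in particular G_n(0,0) = 4n. -/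
open Filter Real

noncomputable def wfun (p : ℝ × ℝ) : ℝ := p.1 * p.2 / (p.1 + p.2)

lemma wfun_nonneg {p : ℝ × ℝ} (hp : p ∈ Set.Ici (0:ℝ) ×ˢ Set.Ici (0:ℝ)) : 0 ≤ wfun p := by
  obtain ⟨h1, h2⟩ := hp
  simp only [Set.mem_Ici] at h1 h2
  exact div_nonneg (mul_nonneg h1 h2) (by linarith)

lemma wfun_le_fst {p : ℝ × ℝ} (hp : p ∈ Set.Ici (0:ℝ) ×ˢ Set.Ici (0:ℝ)) : wfun p ≤ p.1 := by
  obtain ⟨h1, h2⟩ := hp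
  simp only [Set.mem_Ici] at h1 h2
  rcases eq_or_lt_of_le (by positivity : (0:ℝ) ≤ p.1 + p.2) with h | h
  · simp [wfun, ← h]; exact h1
  · rw [wfun, div_le_iff₀ h]
    nlinarith

lemma wfun_contOn : ContinuousOn wfun (Set.Ici (0:ℝ) ×ˢ Set.Ici (0:ℝ)) := by
  intro p hp
  rcases eq_or_ne p (0, 0) with rfl | hne
  · -- squeeze
    have h0 : wfun (0, 0) = 0 := by simp [wfun]
    rw [ContinuousWithinAt, h0]
    refine tendsto_of_tendsto_of_tendsto_of_le_of_le' (g := fun _ => (0:ℝ))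
      (h := fun q : ℝ × ℝ => q.1) tendsto_const_nhds ?_ ?_ ?_
    · have : Tendsto (fun q : ℝ × ℝ => q.1) (nhds (0,0)) (nhds 0) := continuous_fst.tendsto _
      exact this.mono_left nhdsWithin_le_nhds
    · exact eventually_nhdsWithin_of_forall fun q hq => wfun_nonneg hq
    · exact eventually_nhdsWithin_of_forall fun q hq => wfun_le_fst hq
  · have hsum : p.1 + p.2 ≠ 0 := by
      obtain ⟨h1, h2⟩ := hp
      simp only [Set.mem_Ici] at h1 h2
      intro h
      apply hne
      have : p.1 = 0 ∧ p.2 = 0 := by constructor <;> linarith [add_eq_zero_iff_of_nonneg h1 h2 |>.mp h |>.1, add_eq_zero_iff_of_nonneg h1 h2 |>.mp h |>.2]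
      exact Prod.ext this.1 this.2
    exact (ContinuousAt.continuousWithinAt (by
      apply ContinuousAt.div
      · exact (continuous_fst.mul continuous_snd).continuousAt
      · exact (continuous_fst.add continuous_snd).continuousAt
      · exact hsum))

lemma rho_sq {a b : ℝ} (ha : 0 < a) (hb : 0 < b) :
    jacobiRho a b ^ 2 = (a + b) ^ 3 / (a * b) := by
  rw [jacobiRho, div_pow, Real.sq_sqrt (by positivity)]
  congr 1
  rw [← Real.rpow_natCast ((a+b) ^ ((3:ℝ)/2)) 2, ← Real.rpow_mul (by positivity)]
  norm_num


set_option maxHeartbeats 2000000 in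
/-- the recurrence coefficient `C_n`, expressed in `(s,t) = (1/α, 1/β)`,
extends continuously to the closed quadrant, with boundary values `4n(1+ns)`, `4n(1+nt)`, `4n`. -/
theorem Cn_continuous_extension (n : ℕ) (hn : 1 ≤ n) :
    ∃ G : ℝ × ℝ → ℝ, ContinuousOn G (Set.Ici 0 ×ˢ Set.Ici 0) ∧
      (∀ s t : ℝ, 0 < s → 0 < t →
        G (s, t) = jacobiRho (1 / s) (1 / t) ^ 2 *
          (4 * n * (n + 1 / s) * (n + 1 / t) * (n + 1 / s + 1 / t)) /
          ((2 * n + 1 / s + 1 / t - 1) * (2 * n + 1 / s + 1 / t) ^ 2 *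
            (2 * n + 1 / s + 1 / t + 1))) ∧
      (∀ s : ℝ, 0 ≤ s → G (s, 0) = 4 * n * (1 + n * s)) ∧
      (∀ t : ℝ, 0 ≤ t → G (0, t) = 4 * n * (1 + n * t)) ∧
      G (0, 0) = 4 * n := by
  have hn1 : (1:ℝ) ≤ n := by exact_mod_cast hn
  refine ⟨fun p => 4 * n * (n * p.1 + 1) * (n * p.2 + 1) * (n * wfun p + 1) /
      (((2 * n - 1) * wfun p + 1) * ((2 * n) * wfun p + 1) ^ 2 * ((2 * n + 1) * wfun p + 1)),
    ?_, ?_, ?_, ?_, ?_⟩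
  · apply ContinuousOn.div
    · exact ContinuousOn.mul (ContinuousOn.mul (ContinuousOn.mul continuousOn_const
        ((continuousOn_const.mul continuous_fst.continuousOn).add continuousOn_const))
        ((continuousOn_const.mul continuous_snd.continuousOn).add continuousOn_const))
        ((continuousOn_const.mul wfun_contOn).add continuousOn_const)
    · exact ContinuousOn.mul (ContinuousOn.mul
        ((continuousOn_const.mul wfun_contOn).add continuousOn_const)
        (((continuousOn_const.mul wfun_contOn).add continuousOn_const).pow 2))
        ((continuousOn_const.mul wfun_contOn).add continuousOn_const)
    · intro p hp
      have hw := wfun_nonneg hp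
      have h1 : (0:ℝ) < (2 * n - 1) * wfun p + 1 := by nlinarith
      have h2 : (0:ℝ) < (2 * n) * wfun p + 1 := by nlinarith
      have h3 : (0:ℝ) < (2 * n + 1) * wfun p + 1 := by nlinarith
      positivity
  · intro s t hs ht
    have hst : (0:ℝ) < s + t := by positivity
    have hw : wfun (s, t) = s * t / (s + t) := rfl
    have hrho := rho_sq (a := 1/s) (b := 1/t) (by positivity) (by positivity)
    simp only [hrho, hw]
    obtain ⟨w, hwdef⟩ : ∃ w : ℝ, w = s * t / (s + t) := ⟨_, rfl⟩
    rw [← hwdef]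
    have hw0 : (0:ℝ) < w := by rw [hwdef]; positivity
    have h1 : 1 / s + 1 / t = 1 / w := by
      rw [hwdef]; field_simp; ring
    simp only [add_assoc, h1]
    have hB1 : (0:ℝ) < (2 * n - 1) * w + 1 := by nlinarith
    have hB2 : (0:ℝ) < (2 * n) * w + 1 := by nlinarith
    have hB3 : (0:ℝ) < (2 * n + 1) * w + 1 := by nlinarith
    have e1 : (2:ℝ) * n + (1 / w - 1) = ((2 * n - 1) * w + 1) / w := by
      field_simp; all_goals ring
    have e2 : (2:ℝ) * n + 1 / w = ((2 * n) * w + 1) / w := by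
      field_simp; all_goals ring
    have e3 : (2:ℝ) * n + (1 / w + 1) = ((2 * n + 1) * w + 1) / w := by
      field_simp; all_goals ring
    have e4 : (n:ℝ) + 1 / s = (n * s + 1) / s := by field_simp
    have e5 : (n:ℝ) + 1 / t = (n * t + 1) / t := by field_simp
    have e6 : (n:ℝ) + 1 / w = (n * w + 1) / w := by field_simp
    rw [e4, e5, e6]
    rw [show (2:ℝ) * n + 1 / w - 1 = 2 * n + (1 / w - 1) by ring, e1, e3, e2]
    field_simp
  · intro s hs
    have hw : wfun (s, 0) = 0 := by simp [wfun]
    simp only [hw]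
    ring
  · intro t ht
    have hw : wfun (0, t) = 0 := by simp [wfun]
    simp only [hw]
    ring
  · have hw : wfun (0, 0) = 0 := by simp [wfun]
    simp only [hw]
    ring
end

section
/- Fix a nonnegative integer n. For s,t>0 define H_n(s,t) = ρ·((β²−α²)/((2n+α+β)(2n+α+β+2)) + σ), where α=1/s, β=1/t, ρ = (α+β)^{3/2}/(αβ)^{1/2} and σ = (α−β)/(α+β). Then H_n extends to a continuous function on the closed quadrant [0,∞)², and the extension satisfies H_n(s,0) = −(4n+2)√s for s≥0, H_n(0,t) = (4n+2)√t for t≥0, and in particular H_n(0,0) = 0. -/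
open Filter Real

/-- Explicit continuous extension of `B_n` to the closed quadrant. -/
noncomputable def BnExt (n : ℕ) (p : ℝ × ℝ) : ℝ :=
  Real.sqrt (p.1 + p.2) * (p.2 - p.1) *
    ((4 * n + 2) * (p.1 + p.2) + 4 * n * (n + 1) * p.1 * p.2) /
    ((p.1 + p.2 + 2 * n * p.1 * p.2) * (p.1 + p.2 + (2 * n + 2) * p.1 * p.2))

lemma BnExt_bound (n : ℕ) (s t : ℝ) (hs : 0 ≤ s) (ht : 0 ≤ t) :
    |BnExt n (s, t)| ≤ (4 * n + 2) * Real.sqrt (s + t) := by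
  have hc : (0:ℝ) ≤ (n:ℝ) := Nat.cast_nonneg n
  have hst : 0 ≤ s * t := mul_nonneg hs ht
  have hsum : 0 ≤ s + t := add_nonneg hs ht
  rcases eq_or_lt_of_le hsum with h0 | h0
  · have hs0 : s = 0 := by linarith
    have ht0 : t = 0 := by linarith
    simp [BnExt, hs0, ht0]
  · have hd1 : 0 < s + t + 2 * n * s * t := by nlinarith
    have hd2 : 0 < s + t + (2 * n + 2) * s * t := by nlinarith
    have hd : 0 < (s + t + 2 * n * s * t) * (s + t + (2 * n + 2) * s * t) := mul_pos hd1 hd2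
    have hN : 0 ≤ (4 * n + 2) * (s + t) + 4 * n * (n + 1) * s * t := by positivity
    have hsq : 0 ≤ Real.sqrt (s + t) := Real.sqrt_nonneg _
    rw [BnExt, abs_div, abs_of_pos hd, div_le_iff₀ hd]
    have key : |Real.sqrt (s + t) * (t - s) * ((4 * n + 2) * (s + t) + 4 * n * (n + 1) * s * t)|
        ≤ Real.sqrt (s + t) * (s + t) * ((4 * n + 2) * (s + t) + 4 * n * (n + 1) * s * t) := by
      rw [abs_mul, abs_mul, abs_of_nonneg hsq, abs_of_nonneg hN]
      have h1 : |t - s| ≤ s + t := by rw [abs_le]; constructor <;> linarith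
      exact mul_le_mul_of_nonneg_right (mul_le_mul_of_nonneg_left h1 hsq) hN
    refine key.trans ?_
    have poly : (s + t) * ((4 * n + 2) * (s + t) + 4 * n * (n + 1) * s * t)
        ≤ (4 * n + 2) * ((s + t + 2 * n * s * t) * (s + t + (2 * n + 2) * s * t)) := by
      nlinarith [mul_nonneg hst hsum, sq_nonneg (s*t),
        mul_nonneg (mul_nonneg hc hc) (sq_nonneg (s*t)), mul_nonneg hc (mul_nonneg hst hsum)]
    calc Real.sqrt (s+t) * (s+t) * ((4 * n + 2) * (s + t) + 4 * n * (n + 1) * s * t)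
        = Real.sqrt (s+t) * ((s+t) * ((4 * n + 2) * (s + t) + 4 * n * (n + 1) * s * t)) := by ring
      _ ≤ Real.sqrt (s+t) * ((4 * n + 2) * ((s + t + 2 * n * s * t) * (s + t + (2 * n + 2) * s * t))) :=
          mul_le_mul_of_nonneg_left poly hsq
      _ = (4 * n + 2) * Real.sqrt (s+t) * ((s + t + 2 * n * s * t) * (s + t + (2 * n + 2) * s * t)) := by
          ring

lemma BnExt_continuousOn (n : ℕ) : ContinuousOn (BnExt n) (Set.Ici 0 ×ˢ Set.Ici 0) := by
  intro p hp
  rcases eq_or_ne p (0, 0) with rfl | hne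
  · have h0 : BnExt n (0, 0) = 0 := by simp [BnExt]
    rw [ContinuousWithinAt, h0]
    apply squeeze_zero_norm'
    · filter_upwards [self_mem_nhdsWithin] with q hq
      exact (Real.norm_eq_abs _).le.trans (BnExt_bound n q.1 q.2 hq.1 hq.2)
    · have hcont : Continuous fun q : ℝ × ℝ => (4 * (n:ℝ) + 2) * Real.sqrt (q.1 + q.2) := by
        fun_prop
      have h2 := (hcont.tendsto (0, 0)).mono_left
        (nhdsWithin_le_nhds (s := Set.Ici 0 ×ˢ Set.Ici 0))
      simpa using h2
  · have h1 : (0:ℝ) ≤ p.1 := hp.1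
    have h2 : (0:ℝ) ≤ p.2 := hp.2
    have hsum : 0 < p.1 + p.2 := by
      rcases lt_or_eq_of_le h1 with h | h
      · linarith
      rcases lt_or_eq_of_le h2 with h' | h'
      · linarith
      · exact absurd (Prod.ext h.symm h'.symm) hne
    have hst : 0 ≤ p.1 * p.2 := mul_nonneg h1 h2
    have hden : ((p.1 + p.2 + 2 * n * p.1 * p.2) * (p.1 + p.2 + (2 * n + 2) * p.1 * p.2)) ≠ 0 := by
      have hc : (0:ℝ) ≤ (n:ℝ) := Nat.cast_nonneg n
      positivity
    apply ContinuousAt.continuousWithinAt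
    apply ContinuousAt.div
    · fun_prop
    · fun_prop
    · exact hden

/-- the recurrence coefficient `B_n`, expressed in `(s,t) = (1/α, 1/β)`,
extends continuously to the closed quadrant, with boundary values `-(4n+2)√s`, `(4n+2)√t`, `0`. -/
theorem Bn_continuous_extension (n : ℕ) :
    ∃ H : ℝ × ℝ → ℝ, ContinuousOn H (Set.Ici 0 ×ˢ Set.Ici 0) ∧
      (∀ s t : ℝ, 0 < s → 0 < t →
        H (s, t) = jacobiRho (1 / s) (1 / t) *
          (((1 / t) ^ 2 - (1 / s) ^ 2) /
              ((2 * n + 1 / s + 1 / t) * (2 * n + 1 / s + 1 / t + 2))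
            + jacobiSigma (1 / s) (1 / t))) ∧
      (∀ s : ℝ, 0 ≤ s → H (s, 0) = -((4 * n + 2) * Real.sqrt s)) ∧
      (∀ t : ℝ, 0 ≤ t → H (0, t) = (4 * n + 2) * Real.sqrt t) ∧
      H (0, 0) = 0 := by
  refine ⟨BnExt n, BnExt_continuousOn n, ?_, ?_, ?_, ?_⟩
  · intro s t hs ht
    have hc : (0:ℝ) ≤ (n:ℝ) := Nat.cast_nonneg n
    have hu : 0 < 1 / s + 1 / t := by positivity
    have hsum : 0 < s + t := by linarith
    have hrho : jacobiRho (1 / s) (1 / t) = (1 / s + 1 / t) * Real.sqrt (s + t) := by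
      rw [jacobiRho]
      have h32 : (1 / s + 1 / t) ^ ((3:ℝ)/2) = (1 / s + 1 / t) * Real.sqrt (1 / s + 1 / t) := by
        have e : (3:ℝ)/2 = 1 + 1/2 := by norm_num
        rw [e, Real.rpow_add hu, Real.rpow_one, ← Real.sqrt_eq_rpow]
      rw [h32, mul_div_assoc]
      congr 1
      rw [← Real.sqrt_div hu.le]
      congr 1
      field_simp
      ring
    rw [hrho, jacobiSigma, BnExt]
    have key : (t - s) * ((4 * n + 2) * (s + t) + 4 * n * (n + 1) * s * t) /
        ((s + t + 2 * n * s * t) * (s + t + (2 * n + 2) * s * t)) =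
        (1 / s + 1 / t) * (((1 / t) ^ 2 - (1 / s) ^ 2) /
            ((2 * n + 1 / s + 1 / t) * (2 * n + 1 / s + 1 / t + 2))
          + (1 / s - 1 / t) / (1 / s + 1 / t)) := by
      have hd1 : (0:ℝ) < s + t + 2 * n * s * t := by positivity
      have hd2 : (0:ℝ) < s + t + (2 * n + 2) * s * t := by positivity
      have hD1 : (0:ℝ) < 2 * n + 1 / s + 1 / t := by positivity
      have hD2 : (0:ℝ) < 2 * n + 1 / s + 1 / t + 2 := by positivity
      field_simp
      ring
    calc Real.sqrt ((s, t).1 + (s, t).2) * ((s, t).2 - (s, t).1) *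
        ((4 * n + 2) * ((s, t).1 + (s, t).2) + 4 * n * (n + 1) * (s, t).1 * (s, t).2) /
        (((s, t).1 + (s, t).2 + 2 * n * (s, t).1 * (s, t).2) *
          ((s, t).1 + (s, t).2 + (2 * n + 2) * (s, t).1 * (s, t).2))
        = Real.sqrt (s + t) * ((t - s) * ((4 * n + 2) * (s + t) + 4 * n * (n + 1) * s * t) /
        ((s + t + 2 * n * s * t) * (s + t + (2 * n + 2) * s * t))) := by ring
      _ = _ := by rw [key]; ring
  · intro s hs
    rcases eq_or_lt_of_le hs with h | h
    · simp [BnExt, ← h]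
    · rw [BnExt]
      simp only [mul_zero, add_zero, sub_zero, zero_sub, zero_mul]
      rw [div_eq_iff (by positivity)]
      ring
  · intro t ht
    rcases eq_or_lt_of_le ht with h | h
    · simp [BnExt, ← h]
    · rw [BnExt]
      simp only [zero_mul, mul_zero, zero_add, sub_zero, zero_sub, add_zero]
      rw [div_eq_iff (by positivity)]
      ring
  · simp [BnExt]
end

section
/- For every nonnegative integer n, every fixed real α>0 and every real x, the limit as β→+∞ of p_n(x;α,β) exists and equals (−2/√α)^n·ℓ_n^α(α − (√α/2)·x), a rescaled monic Laguerre polynomial. -/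
open Filter Real

private lemma lim_linratio (a b : ℝ) : Filter.Tendsto (fun β : ℝ => (β + a) / (β + b)) Filter.atTop (nhds 1) := by
  have h : Filter.Tendsto (fun β : ℝ => (1 + a * β⁻¹) / (1 + b * β⁻¹)) Filter.atTop (nhds 1) := by
    have hnum : Filter.Tendsto (fun β : ℝ => 1 + a * β⁻¹) Filter.atTop (nhds 1) := by
      simpa using (tendsto_const_nhds.add (tendsto_inv_atTop_zero.const_mul a))
    have hden : Filter.Tendsto (fun β : ℝ => 1 + b * β⁻¹) Filter.atTop (nhds 1) := by
      simpa using (tendsto_const_nhds.add (tendsto_inv_atTop_zero.const_mul b))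
    have h := hnum.div hden one_ne_zero
    rwa [div_one] at h
  refine h.congr' ?_
  filter_upwards [Filter.eventually_gt_atTop (max 0 (-b))] with β hβ
  have hβ0 : β ≠ 0 := by
    have := lt_of_le_of_lt (le_max_left 0 (-b)) hβ; positivity
  have hβb : β + b ≠ 0 := by
    have := lt_of_le_of_lt (le_max_right 0 (-b)) hβ; intro h; nlinarith
  field_simp

private lemma lim_quadratio (α c : ℝ) :
    Filter.Tendsto (fun β : ℝ => β * (α + β) / (β + c) ^ 2) Filter.atTop (nhds 1) := by
  have h : Filter.Tendsto (fun β : ℝ => (α * β⁻¹ + 1) / (1 + c * β⁻¹) ^ 2) Filter.atTop (nhds 1) := by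
    have hnum : Filter.Tendsto (fun β : ℝ => α * β⁻¹ + 1) Filter.atTop (nhds 1) := by
      simpa using ((tendsto_inv_atTop_zero.const_mul α).add tendsto_const_nhds)
    have hden : Filter.Tendsto (fun β : ℝ => (1 + c * β⁻¹) ^ 2) Filter.atTop (nhds 1) := by
      have : Filter.Tendsto (fun β : ℝ => 1 + c * β⁻¹) Filter.atTop (nhds 1) := by
        simpa using (tendsto_const_nhds.add (tendsto_inv_atTop_zero.const_mul c))
      simpa using this.pow 2
    have h := hnum.div hden one_ne_zero
    rwa [div_one] at h
  refine h.congr' ?_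
  filter_upwards [Filter.eventually_gt_atTop (max 0 (-c))] with β hβ
  have hβ0 : β ≠ 0 := by
    have := lt_of_le_of_lt (le_max_left 0 (-c)) hβ; positivity
  have hβc : β + c ≠ 0 := by
    have := lt_of_le_of_lt (le_max_right 0 (-c)) hβ; intro h; nlinarith
  field_simp

private lemma lim_sqrt_quadratio (α c : ℝ) (hα : 0 < α) :
    Filter.Tendsto (fun β : ℝ => Real.sqrt (β * (α + β)) / (β + c)) Filter.atTop (nhds 1) := by
  have h : Filter.Tendsto (fun β : ℝ => Real.sqrt (β * (α + β) / (β + c) ^ 2)) Filter.atTop (nhds 1) := by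
    have := (Real.continuous_sqrt.tendsto 1).comp (lim_quadratio α c)
    simpa [Function.comp_def] using this
  refine h.congr' ?_
  filter_upwards [Filter.eventually_gt_atTop (max 0 (-c))] with β hβ
  have hβ0 : 0 < β := lt_of_le_of_lt (le_max_left 0 (-c)) hβ
  have hβc : 0 < β + c := by
    have := lt_of_le_of_lt (le_max_right 0 (-c)) hβ; linarith
  rw [Real.sqrt_div (by nlinarith), Real.sqrt_sq hβc.le]

private lemma lim_sqrt_oneplus (α : ℝ) :
    Filter.Tendsto (fun β : ℝ => Real.sqrt ((α + β) / β)) Filter.atTop (nhds 1) := by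
  have h0 : Filter.Tendsto (fun β : ℝ => α * β⁻¹ + 1) Filter.atTop (nhds 1) := by
    simpa using ((tendsto_inv_atTop_zero.const_mul α).add tendsto_const_nhds)
  have h : Filter.Tendsto (fun β : ℝ => Real.sqrt (α * β⁻¹ + 1)) Filter.atTop (nhds 1) := by
    have := (Real.continuous_sqrt.tendsto 1).comp h0
    simpa [Function.comp_def] using this
  refine h.congr' ?_
  filter_upwards [Filter.eventually_gt_atTop 0] with β hβ
  congr 1
  field_simp

private lemma poch_pos {a : ℝ} (ha : 0 < a) (m : ℕ) : 0 < poch a m := by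
  refine Finset.prod_pos fun j _ => ?_
  positivity

private lemma poch_add' (a : ℝ) (m₁ m₂ : ℕ) : poch a (m₁ + m₂) = poch a m₁ * poch (a + m₁) m₂ := by
  unfold poch
  rw [Finset.prod_range_add]
  congr 1
  refine Finset.prod_congr rfl fun j _ => ?_
  push_cast
  ring

private lemma sum_eq_laguerre (n : ℕ) (α : ℝ) (hα : 0 < α) (x : ℝ) :
    ∑ k ∈ Finset.range (n+1),
      ((n.factorial : ℝ) * (poch ((n:ℝ)+α-k+1) k / (k.factorial * (n-k).factorial)) *
        (x - 2*Real.sqrt α)^(n-k) * (2/Real.sqrt α)^k)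
    = (-2/Real.sqrt α)^n * monicLaguerre α n (α - Real.sqrt α/2*x) := by
  set s := Real.sqrt α with hs
  have hs0 : 0 < s := Real.sqrt_pos.mpr hα
  have hss : s * s = α := Real.mul_self_sqrt hα.le
  rw [← Finset.sum_range_reflect]
  unfold monicLaguerre
  rw [Finset.mul_sum, Finset.mul_sum]
  refine Finset.sum_congr rfl fun k hk => ?_
  have hk' : k ≤ n := Nat.lt_succ_iff.mp (Finset.mem_range.mp hk)
  have h1 : n + 1 - 1 - k = n - k := by omega
  rw [h1, Nat.sub_sub_self hk', Nat.cast_sub hk']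
  have harg : (n:ℝ) + α - ((n:ℝ) - (k:ℝ)) + 1 = α + k + 1 := by ring
  rw [harg]
  set w := α - s/2*x with hw
  have hbase : (2/s) * (-1) * w = x - 2*s := by
    have hα2 : α = s^2 := by rw [sq]; exact hss.symm
    simp only [hw, hα2]
    field_simp
    ring
  have h2 : (2/s)^k * ((-1:ℝ)^k * w^k) = (x - 2*s)^k := by
    rw [← mul_pow, ← mul_pow, ← mul_assoc, hbase]
  have hsgn : (-2/s)^n = (2/s)^n * (-1:ℝ)^n := by
    rw [← mul_pow]; congr 1; ring
  have hn : (2/s)^n = (2/s)^(n-k) * (2/s)^k := by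
    rw [← pow_add, Nat.sub_add_cancel hk']
  have hsq : (-1:ℝ)^n * (-1:ℝ)^n = 1 := by
    rw [← pow_add, ← two_mul, pow_mul]; norm_num
  rw [show ((-2:ℝ)/s)^n * ((-1:ℝ)^n * (n.factorial:ℝ) * ((-1:ℝ)^k *
        (poch (α+k+1) (n-k) / ((n-k).factorial * k.factorial)) * w^k)) =
      ((-1:ℝ)^n * (-1:ℝ)^n) * ((2/s)^(n-k) * ((2/s)^k * ((-1:ℝ)^k * w^k)) *
        ((n.factorial:ℝ) * (poch (α+k+1) (n-k) / ((n-k).factorial * k.factorial)))) from by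
      rw [hsgn, hn]; ring,
    hsq, h2]
  ring


set_option maxHeartbeats 1600000 in
/-- `lim_{β→∞} p_n(x; α, β) = (-2/√α)^n ℓ_n^α(α - (√α/2)x)` for fixed `α > 0`. -/
theorem rescaled_jacobi_to_laguerre (n : ℕ) (α : ℝ) (hα : 0 < α) (x : ℝ) :
    Filter.Tendsto (fun β : ℝ => rescaledJacobi α β n x) Filter.atTop
      (nhds ((-2 / Real.sqrt α) ^ n *
        monicLaguerre α n (α - Real.sqrt α / 2 * x))) := by
  have hs0 : 0 < Real.sqrt α := Real.sqrt_pos.mpr hα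
  have hss : Real.sqrt α * Real.sqrt α = α := Real.mul_self_sqrt hα.le
  set s := Real.sqrt α with hsdef
  rw [← sum_eq_laguerre n α hα x]
  have hfun : ∀ β : ℝ, rescaledJacobi α β n x = ∑ k ∈ Finset.range (n+1),
      (jacobiRho α β ^ n * ((n.factorial : ℝ) / poch ((n:ℝ) + α + β + 1) n) *
        ((poch ((n:ℝ) + α - k + 1) k / k.factorial) *
          (poch (β + k + 1) (n - k) / (n - k).factorial) *
          ((x / jacobiRho α β - jacobiSigma α β) - 1) ^ (n - k) *
          ((x / jacobiRho α β - jacobiSigma α β) + 1) ^ k)) := by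
    intro β
    unfold rescaledJacobi monicJacobi
    rw [Finset.mul_sum, Finset.mul_sum]
    exact Finset.sum_congr rfl fun k _ => by ring
  refine Tendsto.congr (fun β => (hfun β).symm) ?_
  refine tendsto_finset_sum _ fun k hk => ?_
  have hk' : k ≤ n := Nat.lt_succ_iff.mp (Finset.mem_range.mp hk)
  have hk'' : n - k + k = n := Nat.sub_add_cancel hk'
  set Ck : ℝ := (n.factorial : ℝ) * (poch ((n:ℝ) + α - k + 1) k / (k.factorial * (n-k).factorial)) with hCk
  have hW : Tendsto (fun β : ℝ => x - 2*s*Real.sqrt ((α+β)/β)) atTop (nhds (x - 2*s)) := by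
    have := ((lim_sqrt_oneplus α).const_mul (2*s)).const_sub x
    simpa using this
  have hPr1 : Tendsto (fun β : ℝ => ∏ j ∈ Finset.range (n-k),
      (β + (k:ℝ) + 1 + j) / ((n:ℝ) + α + β + 1 + j)) atTop (nhds 1) := by
    have := tendsto_finset_prod (Finset.range (n-k))
      (f := fun (j : ℕ) (β : ℝ) => (β + (k:ℝ) + 1 + j) / ((n:ℝ) + α + β + 1 + j))
      (x := atTop) (a := fun _ => (1:ℝ))
      (fun j _ => (lim_linratio ((k:ℝ) + 1 + j) ((n:ℝ) + α + 1 + j)).congr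
        (fun β => by ring_nf))
    simpa using this
  have hPr2 : Tendsto (fun β : ℝ => ∏ j ∈ Finset.range k,
      (x + 2*Real.sqrt (β*(α+β))/s) / ((n:ℝ) + α + β + 1 + ((n-k : ℕ):ℝ) + j)) atTop
      (nhds ((2/s)^k)) := by
    have hfac : ∀ j : ℕ, Tendsto (fun β : ℝ =>
        (x + 2*Real.sqrt (β*(α+β))/s) / ((n:ℝ) + α + β + 1 + ((n-k : ℕ):ℝ) + j)) atTop
        (nhds (2/s)) := by
      intro j
      set c : ℝ := (n:ℝ) + α + 1 + ((n-k : ℕ):ℝ) + j with hc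
      have h1 : Tendsto (fun β : ℝ => x / (β + c)) atTop (nhds 0) := by
        have := ((tendsto_atTop_add_const_right atTop c tendsto_id).inv_tendsto_atTop).const_mul x
        simpa [div_eq_mul_inv] using this
      have h2 : Tendsto (fun β : ℝ => Real.sqrt (β*(α+β)) / (β + c)) atTop (nhds 1) :=
        lim_sqrt_quadratio α c hα
      have h3 : Tendsto (fun β : ℝ => x / (β + c) + (2/s) * (Real.sqrt (β*(α+β)) / (β + c)))
          atTop (nhds (2/s)) := by simpa using h1.add (h2.const_mul (2/s))
      refine h3.congr fun β => ?_
      rw [hc]; ring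
    have := tendsto_finset_prod (Finset.range k)
      (f := fun (j : ℕ) (β : ℝ) =>
        (x + 2*Real.sqrt (β*(α+β))/s) / ((n:ℝ) + α + β + 1 + ((n-k : ℕ):ℝ) + j))
      (x := atTop) (a := fun _ => (2/s : ℝ)) (fun j _ => hfac j)
    simpa [div_pow] using this
  have hG : Tendsto (fun β : ℝ => Ck * (x - 2*s*Real.sqrt ((α+β)/β))^(n-k) *
      (∏ j ∈ Finset.range (n-k), (β + (k:ℝ) + 1 + j) / ((n:ℝ) + α + β + 1 + j)) *
      (∏ j ∈ Finset.range k,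
        (x + 2*Real.sqrt (β*(α+β))/s) / ((n:ℝ) + α + β + 1 + ((n-k : ℕ):ℝ) + j))) atTop
      (nhds ((n.factorial : ℝ) * (poch ((n:ℝ) + α - k + 1) k / (k.factorial * (n-k).factorial)) *
        (x - 2*s)^(n-k) * (2/s)^k)) := by
    have h := ((((tendsto_const_nhds :
        Tendsto (fun _ : ℝ => Ck) atTop (nhds Ck))).mul (hW.pow (n-k))).mul hPr1).mul hPr2
    have heq : Ck * (x - 2*s)^(n-k) * 1 * (2/s)^k
        = (n.factorial : ℝ) * (poch ((n:ℝ) + α - k + 1) k / (k.factorial * (n-k).factorial)) *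
          (x - 2*s)^(n-k) * (2/s)^k := by rw [hCk]; ring
    rw [← heq]
    exact h
  refine hG.congr' ?_
  filter_upwards [eventually_gt_atTop 0] with β hβ
  have hab : 0 < α + β := by linarith
  have hsb : 0 < Real.sqrt β := Real.sqrt_pos.mpr hβ
  have hsc : 0 < Real.sqrt (α+β) := Real.sqrt_pos.mpr hab
  have hssb : Real.sqrt β * Real.sqrt β = β := Real.mul_self_sqrt hβ.le
  have hρ : jacobiRho α β = (α+β) * Real.sqrt (α+β) / (s * Real.sqrt β) := by
    unfold jacobiRho
    rw [Real.sqrt_mul hα.le, show ((3:ℝ)/2) = 1 + 1/2 by norm_num,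
      Real.rpow_add hab, Real.rpow_one, ← Real.sqrt_eq_rpow]
  have hρpos : 0 < jacobiRho α β := by
    rw [hρ]; exact div_pos (mul_pos hab hsc) (mul_pos hs0 hsb)
  have E1 : jacobiRho α β * ((x / jacobiRho α β - jacobiSigma α β) - 1)
      = x - 2*s*Real.sqrt ((α+β)/β) := by
    have hstep1 : jacobiRho α β * (jacobiSigma α β + 1) = 2*s*Real.sqrt ((α+β)/β) := by
      unfold jacobiSigma
      rw [Real.sqrt_div hab.le, hρ]
      field_simp
      linear_combination (-2)*hss
    have hx : jacobiRho α β * (x / jacobiRho α β) = x := by field_simp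
    calc jacobiRho α β * ((x / jacobiRho α β - jacobiSigma α β) - 1)
        = jacobiRho α β * (x / jacobiRho α β) - jacobiRho α β * (jacobiSigma α β + 1) := by ring
      _ = x - 2*s*Real.sqrt ((α+β)/β) := by rw [hx, hstep1]
  have E2 : jacobiRho α β * ((x / jacobiRho α β - jacobiSigma α β) + 1)
      = x + 2*Real.sqrt (β*(α+β))/s := by
    have hstep2 : jacobiRho α β * (1 - jacobiSigma α β) = 2*Real.sqrt (β*(α+β))/s := by
      unfold jacobiSigma
      rw [Real.sqrt_mul hβ.le, hρ]
      field_simp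
      linear_combination (-2)*hssb
    have hx : jacobiRho α β * (x / jacobiRho α β) = x := by field_simp
    calc jacobiRho α β * ((x / jacobiRho α β - jacobiSigma α β) + 1)
        = jacobiRho α β * (x / jacobiRho α β) + jacobiRho α β * (1 - jacobiSigma α β) := by ring
      _ = x + 2*Real.sqrt (β*(α+β))/s := by rw [hx, hstep2]
  have hcastn : (0:ℝ) ≤ (n:ℝ) := Nat.cast_nonneg n
  have hcastnk : (0:ℝ) ≤ ((n-k : ℕ):ℝ) := Nat.cast_nonneg _
  have hpA1 : 0 < poch ((n:ℝ)+α+β+1) (n-k) := poch_pos (by linarith) _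
  have hpA2 : 0 < poch ((n:ℝ)+α+β+1+((n-k : ℕ):ℝ)) k := poch_pos (by linarith) _
  have hPsplit : poch ((n:ℝ)+α+β+1) n
      = poch ((n:ℝ)+α+β+1) (n-k) * poch ((n:ℝ)+α+β+1+((n-k : ℕ):ℝ)) k := by
    have h := poch_add' ((n:ℝ)+α+β+1) (n-k) k
    rw [hk''] at h
    exact h
  have hρn : jacobiRho α β ^ n = jacobiRho α β ^ (n-k) * jacobiRho α β ^ k := by
    rw [← pow_add, hk'']
  have hprod1 : (∏ j ∈ Finset.range (n-k), (β + (k:ℝ) + 1 + j) / ((n:ℝ) + α + β + 1 + j))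
      = poch (β + (k:ℝ) + 1) (n-k) / poch ((n:ℝ) + α + β + 1) (n-k) := by
    simp only [poch]
    rw [Finset.prod_div_distrib]
  have hprod2 : (∏ j ∈ Finset.range k,
        (x + 2*Real.sqrt (β*(α+β))/s) / ((n:ℝ) + α + β + 1 + ((n-k : ℕ):ℝ) + j))
      = (x + 2*Real.sqrt (β*(α+β))/s)^k / poch ((n:ℝ) + α + β + 1 + ((n-k : ℕ):ℝ)) k := by
    simp only [poch]
    rw [Finset.prod_div_distrib, Finset.prod_const, Finset.card_range]
  have hz1 : (x - 2*s*Real.sqrt ((α+β)/β))^(n-k)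
      = jacobiRho α β ^ (n-k) * ((x / jacobiRho α β - jacobiSigma α β) - 1)^(n-k) := by
    rw [← mul_pow, E1]
  have hz2 : (x + 2*Real.sqrt (β*(α+β))/s)^k
      = jacobiRho α β ^ k * ((x / jacobiRho α β - jacobiSigma α β) + 1)^k := by
    rw [← mul_pow, E2]
  have hfk : ((k.factorial : ℝ)) ≠ 0 := Nat.cast_ne_zero.mpr k.factorial_ne_zero
  have hfnk : (((n-k).factorial : ℝ)) ≠ 0 := Nat.cast_ne_zero.mpr (n-k).factorial_ne_zero
  set Y := x / jacobiRho α β - jacobiSigma α β with hY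
  rw [hCk, hPsplit, hρn, hprod1, hprod2, hz1, hz2]
  field_simp
end

section
/- For all α,b,ν>0 and every nonnegative integer n, the limit as d→+∞ of p_n(x;α,b,d,ν) exists for every real x, and there exist a nonzero real ρ' and a real σ' such that this limit equals ρ'^n·q̂_n(ρ'^{−1}x−σ'; α, bα, bν) for all real x; that is, in the limit d→∞ the rescaled monic Racah polynomials become rescaled monic Hahn polynomials with parameters (α, bα, bν). -/
open Filter Real

/-! ### Auxiliary definitions and lemmas for the d → ∞ limit -/

noncomputable def auxG (α β N ε : ℝ) : ℝ :=
  Real.sqrt ((α + β) ^ 3 / (α * β * (N + α + β) * N) / ((ε * β + 1) * (1 - ε * α)))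

noncomputable def auxF (α β N x : ℝ) (n : ℕ) (ε : ℝ) : ℝ :=
  auxG α β N ε ^ n * ((1 / poch (n + α + β + 1) n) *
    ∑ k ∈ Finset.range (n + 1),
      (poch (-(n : ℝ)) k * poch (n + α + β + 1) k / k.factorial) *
      poch (α + k + 1) (n - k) *
      (∏ i ∈ Finset.range (n - k), (ε * (β + (k : ℝ) + 1 + (i : ℝ)) + 1)) *
      poch ((k : ℝ) - N) (n - k) *
      ∏ j ∈ Finset.range k,
        (ε * (j : ℝ) * ((j : ℝ) - N) + (j : ℝ) - x / auxG α β N ε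
          - N * (α + 1) * (ε * ((β : ℝ) + 1) + 1) / (α + β + 2)))

lemma auxG_cont (α β N : ℝ) : ContinuousAt (auxG α β N) 0 := by
  unfold auxG
  apply Real.continuous_sqrt.continuousAt.comp
  exact ContinuousAt.div continuousAt_const (by fun_prop) (by norm_num)

lemma auxG_zero (α β N : ℝ) :
    auxG α β N 0 = Real.sqrt ((α + β) ^ 3 / (α * β * (N + α + β) * N)) := by
  unfold auxG; norm_num

lemma auxG_zero_pos (α β N : ℝ) (hα : 0 < α) (hβ : 0 < β) (hN : 0 < N) :
    0 < auxG α β N 0 := by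
  rw [auxG_zero]
  apply Real.sqrt_pos.mpr
  positivity

lemma auxF_tendsto (α β N x : ℝ) (n : ℕ) (hα : 0 < α) (hβ : 0 < β) (hN : 0 < N) :
    Tendsto (auxF α β N x n) (nhds 0) (nhds (auxF α β N x n 0)) := by
  have hg : ContinuousAt (auxG α β N) 0 := auxG_cont α β N
  have hg0 : auxG α β N 0 ≠ 0 := (auxG_zero_pos α β N hα hβ hN).ne'
  have hx : ContinuousAt (fun ε => x / auxG α β N ε) 0 :=
    ContinuousAt.div continuousAt_const hg hg0
  unfold auxF
  apply ContinuousAt.mul (hg.pow n)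
  apply ContinuousAt.mul continuousAt_const
  apply tendsto_finset_sum
  intro k _
  apply ContinuousAt.mul
  apply ContinuousAt.mul
  apply ContinuousAt.mul
  apply ContinuousAt.mul continuousAt_const continuousAt_const
  · apply tendsto_finset_prod
    intro i _
    show ContinuousAt (fun ε : ℝ => ε * (β + (k : ℝ) + 1 + (i : ℝ)) + 1) 0
    fun_prop
  · exact continuousAt_const
  · apply tendsto_finset_prod
    intro j _
    show ContinuousAt (fun ε : ℝ =>
      ε * (j : ℝ) * ((j : ℝ) - N) + (j : ℝ) - x / auxG α β N ε
        - N * (α + 1) * (ε * ((β : ℝ) + 1) + 1) / (α + β + 2)) 0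
    apply ContinuousAt.sub
    apply ContinuousAt.sub (by fun_prop) hx
    apply ContinuousAt.div_const
    fun_prop

lemma auxF_zero (α β N x : ℝ) (n : ℕ) :
    auxF α β N x n 0 =
      auxG α β N 0 ^ n *
        monicHahn α β N n (x / auxG α β N 0 + N * (α + 1) / (α + β + 2)) := by
  unfold auxF monicHahn
  congr 1
  congr 1
  apply Finset.sum_congr rfl
  intro k hk
  rw [show (∏ i ∈ Finset.range (n - k), ((0:ℝ) * (β + (k:ℝ) + 1 + (i:ℝ)) + 1)) = 1 from by simp]
  rw [show poch (-(x / auxG α β N 0 + N * (α + 1) / (α + β + 2))) k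
      = ∏ j ∈ Finset.range k, ((0:ℝ) * (j:ℝ) * ((j:ℝ) - N) + (j:ℝ) - x / auxG α β N 0
          - N * (α + 1) * ((0:ℝ) * (β + 1) + 1) / (α + β + 2)) from by
    unfold poch
    exact Finset.prod_congr rfl fun j _ => by ring]
  ring

lemma sum_helper {u v p : ℝ} {s : Finset ℕ} {f g : ℕ → ℝ} (h : ∀ k ∈ s, u * f k = v * g k) :
    u * (p * ∑ k ∈ s, f k) = v * (p * ∑ k ∈ s, g k) := by
  rw [mul_left_comm, Finset.mul_sum, Finset.sum_congr rfl h, ← Finset.mul_sum, mul_left_comm]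

lemma aux_eq (α b ν : ℝ) (hα : 0 < α) (hb : 0 < b) (hν : 0 < ν) (n : ℕ) (x d : ℝ)
    (hd : 1 ≤ d) :
    rescaledRacah α b d ν n x = auxF α (b * α) (b * ν) x n (((b * d * ν + 1) * α)⁻¹) := by
  have hβ : 0 < b * α := mul_pos hb hα
  have hN : 0 < b * ν := mul_pos hb hν
  have hd0 : 0 < d := lt_of_lt_of_le one_pos hd
  have ht : 0 < (b * d * ν + 1) * α := by positivity
  have htα : α < (b * d * ν + 1) * α := by
    nlinarith [mul_pos (mul_pos (mul_pos hb hd0) hν) hα]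
  have hε : 0 < ((b * d * ν + 1) * α)⁻¹ := inv_pos.mpr ht
  have hεt : ((b * d * ν + 1) * α)⁻¹ * ((b * d * ν + 1) * α) = 1 := inv_mul_cancel₀ ht.ne'
  have h1 : 0 < ((b * d * ν + 1) * α)⁻¹ * (b * α) + 1 := by positivity
  have h2 : 0 < 1 - ((b * d * ν + 1) * α)⁻¹ * α := by
    have h := mul_lt_mul_of_pos_left htα hε
    rw [hεt] at h
    linarith
  have hG : 0 < auxG α (b * α) (b * ν) (((b * d * ν + 1) * α)⁻¹) := by
    apply Real.sqrt_pos.mpr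
    exact div_pos (by positivity) (mul_pos h1 h2)
  have hρ : racahRho α b d ν
      = ((b * d * ν + 1) * α)⁻¹ * auxG α (b * α) (b * ν) (((b * d * ν + 1) * α)⁻¹) := by
    unfold racahRho auxG
    rw [show (α + b * α) ^ 3 /
        (α * (b * α) * (b * α + (b * d * ν + 1) * α) * (b * ν + α + b * α) *
          ((b * d * ν + 1) * α - α) * (b * ν))
      = (((b * d * ν + 1) * α)⁻¹) ^ 2 *
        ((α + b * α) ^ 3 / (α * (b * α) * (b * ν + α + b * α) * (b * ν)) /
          ((((b * d * ν + 1) * α)⁻¹ * (b * α) + 1) * (1 - ((b * d * ν + 1) * α)⁻¹ * α))) from by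
      have k1 : b * α + (b * d * ν + 1) * α ≠ 0 := by positivity
      have k2 : (b * d * ν + 1) * α - α ≠ 0 := by
        have := htα; intro h; nlinarith
      have k3 : b * ν + α + b * α ≠ 0 := by positivity
      have k4 : ((b * d * ν + 1) * α) ≠ 0 := ht.ne'
      field_simp [k1, k2, k3, k4]]
    rw [Real.sqrt_mul (sq_nonneg _), Real.sqrt_sq hε.le]
  simp only [rescaledRacah, monicRacah, racahSigma, auxF]
  rw [hρ]
  set t := (b * d * ν + 1) * α with htdef
  set ε := t⁻¹ with hεdef
  set G := auxG α (b * α) (b * ν) ε with hGdef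
  clear_value t ε G
  have hA2 : (0:ℝ) < α + b * α + 2 := by positivity
  refine sum_helper ?_
  intro k hk
  have hkn : k ≤ n := Nat.lt_succ_iff.mp (Finset.mem_range.mp hk)
  have e1 : poch (b * α + t + (k:ℝ) + 1) (n - k)
      = t ^ (n - k) * ∏ i ∈ Finset.range (n - k), (ε * (b * α + (k : ℝ) + 1 + (i : ℝ)) + 1) := by
    unfold poch
    rw [show (t ^ (n-k) : ℝ) = ∏ _i ∈ Finset.range (n - k), t from by
          rw [Finset.prod_const, Finset.card_range],
        ← Finset.prod_mul_distrib]
    refine Finset.prod_congr rfl fun i _ => ?_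
    rw [hεdef]
    field_simp
    ring
  have e2 : (∏ j ∈ Finset.range k, ((j : ℝ) * ((j:ℝ) + t - b * ν) -
        (x / (ε * G) - -(b * ν * (α + 1) * (b * α + t + 1)) / (α + b * α + 2))))
      = t ^ k * ∏ j ∈ Finset.range k,
          (ε * (j : ℝ) * ((j : ℝ) - b * ν) + (j : ℝ) - x / G
            - b * ν * (α + 1) * (ε * ((b * α : ℝ) + 1) + 1) / (α + b * α + 2)) := by
    rw [show (t ^ k : ℝ) = ∏ _j ∈ Finset.range k, t from by
          rw [Finset.prod_const, Finset.card_range],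
        ← Finset.prod_mul_distrib]
    refine Finset.prod_congr rfl fun j _ => ?_
    rw [hεdef]
    field_simp
    ring
  have hpow : (ε * G) ^ n * (t ^ (n - k) * t ^ k) = G ^ n := by
    rw [pow_sub_mul_pow t hkn,
        show (ε * G) ^ n * t ^ n = (ε * t) ^ n * G ^ n from by rw [mul_pow, mul_pow]; ring,
        hεt, one_pow, one_mul]
  rw [e1, e2, ← hpow]
  ring

/-- as `d → ∞`, the rescaled monic Racah polynomials tend to rescaled monic
Hahn polynomials with parameters `(α, bα, bν)`. -/
theorem rescaled_racah_to_hahn (α b ν : ℝ) (hα : 0 < α) (hb : 0 < b) (hν : 0 < ν) (n : ℕ) :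
    ∃ ρ' σ' : ℝ, ρ' ≠ 0 ∧ ∀ x : ℝ,
      Filter.Tendsto (fun d : ℝ => rescaledRacah α b d ν n x) Filter.atTop
        (nhds (ρ' ^ n * monicHahn α (b * α) (b * ν) n (x / ρ' - σ'))) := by
  have hβ : 0 < b * α := mul_pos hb hα
  have hN : 0 < b * ν := mul_pos hb hν
  refine ⟨auxG α (b * α) (b * ν) 0, -((b * ν) * (α + 1) / (α + b * α + 2)),
    (auxG_zero_pos α (b * α) (b * ν) hα hβ hN).ne', ?_⟩
  intro x
  have hδ : Tendsto (fun d : ℝ => ((b * d * ν + 1) * α)⁻¹) atTop (nhds 0) := by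
    apply Tendsto.inv_tendsto_atTop
    have h : Tendsto (fun d : ℝ => (b * ν * α) * d + α) atTop atTop :=
      tendsto_atTop_add_const_right _ α (Tendsto.const_mul_atTop (by positivity) tendsto_id)
    exact h.congr fun d => by ring
  have hlim := (auxF_tendsto α (b * α) (b * ν) x n hα hβ hN).comp hδ
  have heq : ∀ᶠ d in atTop,
      auxF α (b * α) (b * ν) x n (((b * d * ν + 1) * α)⁻¹) = rescaledRacah α b d ν n x := by
    filter_upwards [eventually_ge_atTop 1] with d hd
    exact (aux_eq α b ν hα hb hν n x d hd).symm
  have hfin := hlim.congr' heq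
  rw [auxF_zero] at hfin
  rw [sub_neg_eq_add]
  exact hfin
end
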